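/- Let γ̃(x̃,ỹ) = γ̃₂(x̃,ỹ) − γ̃₁(x̃,ỹ) with γ̃₁ = −(x̃²+ỹ²)/(2R), γ̃₂ = 1 + (x̃²+ỹ²)/(2S), let p be a C² solution of the Reynolds equation −(1/12)div(γ̃³∇p) = u*_⊥ on ℝ² for a constant u*_⊥, and define the lubrication velocity field (u_x, u_y, u_z) as in the Poiseuille ansatz (u_h = (1/2)(z̃−γ̃₁)(z̃−γ̃₂)∇p, u_z = (1/2)div_{x̃,ỹ}[∫_{z̃}^{γ̃₂} (s−γ̃₂)(s−γ̃₁)∇p ds]). Then u_z(x̃,ỹ,γ̃₂(x̃,ỹ)) = 0 and u_z(x̃,ỹ,γ̃₁(x̃,ỹ)) = u*_⊥ for all (x̃,ỹ) ∈ ℝ², i.e., the ansatz attains the prescribed normal boundary data on both surfaces. -/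

import Mathlib

/-!
The Poiseuille profile integrates in closed form:
`∫ s in z..B, (s - B) * (s - A) = (B - z)^3 / 3 - (B - A) * (B - z)^2 / 2`.
The horizontal derivatives in `u_z` are taken with `z` frozen and only then is `z` set to a
boundary value. For `z = B(x)` both the closed form and its derivative vanish at `x`. For
`z = A(x)` the derivative of the integral of `(s - B) * (s - A) * c` equals
`-(1/6) ∂ₓ((B - A)^3 c)`, so `u_z` on the lower surface is
`-(1/12) div(γ̃³ ∇p)`, which is `u*_⊥` by the Reynolds equation.
-/

/-- Partial derivative in the first variable of a function of two real variables. -/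
noncomputable def pdx (p : ℝ → ℝ → ℝ) (x y : ℝ) : ℝ := deriv (fun t => p t y) x

/-- Partial derivative in the second variable of a function of two real variables. -/
noncomputable def pdy (p : ℝ → ℝ → ℝ) (x y : ℝ) : ℝ := deriv (fun t => p x t) y

theorem integral_sub_mul_sub_mul_const (a b c z : ℝ) :
    ∫ s in z..b, (s - b) * (s - a) * c = c * ((b - z) ^ 3 / 3 - (b - a) * (b - z) ^ 2 / 2) := by
  have hF : ∀ s ∈ Set.uIcc z b,
      HasDerivAt (fun s => c * ((s - b) ^ 3 / 3 + (b - a) * (s - b) ^ 2 / 2))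
        ((s - b) * (s - a) * c) s := fun s _ =>
    (((((hasDerivAt_id' s).sub_const b).fun_pow 3).div_const 3).fun_add
      ((((hasDerivAt_id' s).sub_const b).fun_pow 2).const_mul (b - a) |>.div_const 2)).const_mul c
      |>.congr_deriv (by push_cast; ring)
  rw [intervalIntegral.integral_eq_sub_of_hasDerivAt hF
    ((by fun_prop : Continuous fun s => (s - b) * (s - a) * c).intervalIntegrable z b)]
  ring

section FluxDerivative

variable {A B c : ℝ → ℝ} {a' b' c' x : ℝ}

theorem hasDerivAt_integral_sub_mul_sub_mul (z : ℝ)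
    (hA : HasDerivAt A a' x) (hB : HasDerivAt B b' x) (hc : HasDerivAt c c' x) :
    HasDerivAt (fun t => ∫ s in z..B t, (s - B t) * (s - A t) * c t)
      (c' * ((B x - z) ^ 3 / 3 - (B x - A x) * (B x - z) ^ 2 / 2)
        + c x * ((B x - z) ^ 2 * b' - (b' - a') * (B x - z) ^ 2 / 2
          - (B x - A x) * ((B x - z) * b'))) x := by
  simp_rw [integral_sub_mul_sub_mul_const]
  exact hc.fun_mul ((((hB.sub_const z).fun_pow 3).div_const 3).fun_sub
    (((hB.fun_sub hA).fun_mul ((hB.sub_const z).fun_pow 2)).div_const 2))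
    |>.congr_deriv (by push_cast; ring)

theorem deriv_integral_sub_mul_sub_mul_from_upper
    (hA : DifferentiableAt ℝ A x) (hB : DifferentiableAt ℝ B x) (hc : DifferentiableAt ℝ c x) :
    deriv (fun t => ∫ s in B x..B t, (s - B t) * (s - A t) * c t) x = 0 :=
  (hasDerivAt_integral_sub_mul_sub_mul (B x) hA.hasDerivAt hB.hasDerivAt
    hc.hasDerivAt).deriv.trans (by ring)

theorem deriv_integral_sub_mul_sub_mul_from_lower
    (hA : DifferentiableAt ℝ A x) (hB : DifferentiableAt ℝ B x) (hc : DifferentiableAt ℝ c x) :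
    deriv (fun t => ∫ s in A x..B t, (s - B t) * (s - A t) * c t) x
      = -(1 / 6) * deriv (fun t => (B t - A t) ^ 3 * c t) x := by
  rw [(hasDerivAt_integral_sub_mul_sub_mul (A x) hA.hasDerivAt hB.hasDerivAt hc.hasDerivAt).deriv,
    (((hB.hasDerivAt.fun_sub hA.hasDerivAt).fun_pow 3).fun_mul hc.hasDerivAt).deriv]
  push_cast; ring

end FluxDerivative

theorem differentiable_pdx {p : ℝ → ℝ → ℝ} (hp : ContDiff ℝ 2 (fun q : ℝ × ℝ => p q.1 q.2))
    (y : ℝ) : Differentiable ℝ (fun t => pdx p t y) :=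
  (hp.comp (contDiff_id.prodMk contDiff_const)).differentiable_deriv_two

theorem differentiable_pdy {p : ℝ → ℝ → ℝ} (hp : ContDiff ℝ 2 (fun q : ℝ × ℝ => p q.1 q.2))
    (x : ℝ) : Differentiable ℝ (fun t => pdy p x t) :=
  (hp.comp (contDiff_const.prodMk contDiff_id)).differentiable_deriv_two

theorem lubrication_ansatz_boundary_values
    (R S ustar : ℝ)
    (p : ℝ → ℝ → ℝ) (hp : ContDiff ℝ 2 (fun q : ℝ × ℝ => p q.1 q.2))
    (γ₁ γ₂ : ℝ → ℝ → ℝ)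
    (hγ₁ : γ₁ = fun x y => -(x ^ 2 + y ^ 2) / (2 * R))
    (hγ₂ : γ₂ = fun x y => 1 + (x ^ 2 + y ^ 2) / (2 * S))
    (hreynolds : ∀ x y : ℝ,
      -(1 / 12) * (deriv (fun t => (γ₂ t y - γ₁ t y) ^ 3 * pdx p t y) x
        + deriv (fun t => (γ₂ x t - γ₁ x t) ^ 3 * pdy p x t) y) = ustar)
    (uz : ℝ → ℝ → ℝ → ℝ)
    (huz : uz = fun x y z => (1 / 2) *
      (deriv (fun t => ∫ s in z..(γ₂ t y), (s - γ₂ t y) * (s - γ₁ t y) * pdx p t y) x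
        + deriv (fun t => ∫ s in z..(γ₂ x t), (s - γ₂ x t) * (s - γ₁ x t) * pdy p x t) y)) :
    ∀ x y : ℝ, uz x y (γ₂ x y) = 0 ∧ uz x y (γ₁ x y) = ustar := by
  intro x y
  have hγ₁x : DifferentiableAt ℝ (fun t => γ₁ t y) x := by subst hγ₁; fun_prop
  have hγ₂x : DifferentiableAt ℝ (fun t => γ₂ t y) x := by subst hγ₂; fun_prop
  have hγ₁y : DifferentiableAt ℝ (fun t => γ₁ x t) y := by subst hγ₁; fun_prop
  have hγ₂y : DifferentiableAt ℝ (fun t => γ₂ x t) y := by subst hγ₂; fun_prop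
  have hpx := differentiable_pdx hp y x
  have hpy := differentiable_pdy hp x y
  simp only [huz]
  constructor
  · rw [deriv_integral_sub_mul_sub_mul_from_upper hγ₁x hγ₂x hpx,
      deriv_integral_sub_mul_sub_mul_from_upper hγ₁y hγ₂y hpy]
    ring
  · rw [deriv_integral_sub_mul_sub_mul_from_lower hγ₁x hγ₂x hpx,
      deriv_integral_sub_mul_sub_mul_from_lower hγ₁y hγ₂y hpy]
    linarith [hreynolds x y]
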